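/- Let $H$ be a subset of an associative unital $K$-algebra $R$ and suppose $r\in\mathrm{L}_k(H)$ (the $k$-th Lie centralizer). Then for any $1\le j\le k$ and any $x_1,\ldots,x_k\in H$, the left-normed commutator $[x_1,\ldots,x_j,r,x_{j+1},\ldots,x_k]_{k+1}=0$. -/

import Mathlib

/-- `lprod r [x₁, …, xₘ]` is the left-normed commutator `[r, x₁, …, xₘ]_{m+1}`. -/
def lprod {R : Type*} [Ring R] (r : R) (l : List R) : R :=
  l.foldl (fun a x => a * x - x * a) r

/-- The `k`-th Lie centralizer of a subset `H` of `R`: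
`Lcen k H = {r : R | [r, x₁, …, x_k]_{k+1} = 0 for all xᵢ ∈ H}`. -/
def Lcen {R : Type*} [Ring R] (k : ℕ) (H : Set R) : Set R :=
  {r : R | ∀ x : Fin k → R, (∀ i, x i ∈ H) → lprod r (List.ofFn x) = 0}

/-- `llc [x₁, …, xₘ]` is the left-normed commutator `[x₁, …, xₘ]ₘ` (and `0` on `[]`). -/
def llc {R : Type*} [Ring R] : List R → R
  | [] => 0
  | a :: t => lprod a t

/-!
Write `Lₙ = Lcen n H`, so that `r ∈ Lₙ₊₁` gives `[r, a] ∈ Lₙ` for `a ∈ H`. By induction on `m`,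
`[r, [x₁, …, xₘ]] ∈ Lₙ` whenever `r ∈ Lₘ₊ₙ` and the `xᵢ ∈ H`: the Jacobi identity
`[r, [u, a]] = [[r, u], a] - [[r, a], u]` splits the inductive step into two terms, each handled by
the induction hypothesis and one bracket with `a ∈ H`. Since `[x₁, …, xⱼ, r] = -[r, [x₁, …, xⱼ]]`,
the remaining brackets with `xⱼ₊₁, …, x_k` then vanish.
-/

section

attribute [local instance] LieRing.ofAssociativeRing

variable {R : Type*} [Ring R]

lemma lprod_nil (r : R) : lprod r [] = r := rfl

lemma lprod_cons (r a : R) (t : List R) : lprod r (a :: t) = lprod ⁅r, a⁆ t := by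
  rw [Ring.lie_def]; rfl

lemma lprod_append (r : R) (s t : List R) : lprod r (s ++ t) = lprod (lprod r s) t :=
  List.foldl_append

lemma lprod_concat (r a : R) (t : List R) : lprod r (t ++ [a]) = ⁅lprod r t, a⁆ := by
  rw [lprod_append, lprod_cons, lprod_nil]

lemma lprod_add (u v : R) (t : List R) : lprod (u + v) t = lprod u t + lprod v t := by
  induction t generalizing u v with
  | nil => rfl
  | cons a t ih => simp only [lprod_cons, add_lie, ih]

lemma lprod_neg (u : R) (t : List R) : lprod (-u) t = -lprod u t := by
  induction t generalizing u with
  | nil => rfl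
  | cons a t ih => simp only [lprod_cons, neg_lie, ih]

variable {H : Set R} {n : ℕ}

lemma add_mem_Lcen {u v : R} (hu : u ∈ Lcen n H) (hv : v ∈ Lcen n H) : u + v ∈ Lcen n H :=
  fun x hx => by rw [lprod_add, hu x hx, hv x hx, add_zero]

lemma neg_mem_Lcen {u : R} (hu : u ∈ Lcen n H) : -u ∈ Lcen n H :=
  fun x hx => by rw [lprod_neg, hu x hx, neg_zero]

lemma lie_mem_Lcen {r a : R} (hr : r ∈ Lcen (n + 1) H) (ha : a ∈ H) : ⁅r, a⁆ ∈ Lcen n H := by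
  intro x hx
  have := hr (Fin.cons a x) (Fin.forall_fin_succ.2 ⟨ha, hx⟩)
  rwa [List.ofFn_succ, Fin.cons_zero, lprod_cons] at this

lemma lprod_eq_zero_of_mem_Lcen {r : R} {t : List R} (hr : r ∈ Lcen t.length H)
    (ht : ∀ a ∈ t, a ∈ H) : lprod r t = 0 := by
  simpa only [List.ofFn_get] using hr t.get fun i => ht _ (t.get_mem i)

lemma lie_lprod_mem_Lcen {b : R} (hb : b ∈ H) {t : List R} (ht : ∀ a ∈ t, a ∈ H) :
    ∀ {n : ℕ} {r : R}, r ∈ Lcen (t.length + 1 + n) H → ⁅r, lprod b t⁆ ∈ Lcen n H := by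
  induction t using List.reverseRecOn with
  | nil =>
    intro n r hr
    rw [List.length_nil, zero_add, add_comm] at hr
    exact lie_mem_Lcen hr hb
  | append_singleton t a ih =>
    intro n r hr
    have ht' : ∀ c ∈ t, c ∈ H := fun c hc => ht c (List.mem_append_left _ hc)
    have ha : a ∈ H := ht a (List.mem_append_right _ (List.mem_singleton_self a))
    rw [List.length_append, List.length_singleton] at hr
    have jacobi : ⁅r, ⁅lprod b t, a⁆⁆ = ⁅⁅r, lprod b t⁆, a⁆ + -⁅⁅r, a⁆, lprod b t⁆ := by
      rw [leibniz_lie, lie_skew]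
    rw [lprod_concat, jacobi]
    refine add_mem_Lcen (lie_mem_Lcen (ih ht' ?_) ha) (neg_mem_Lcen (ih ht' ?_))
    · rwa [show t.length + 1 + (n + 1) = t.length + 1 + 1 + n by omega]
    · exact lie_mem_Lcen (by rwa [show t.length + 1 + n + 1 = t.length + 1 + 1 + n by omega]) ha

lemma llc_append_cons_eq_zero {s d : List R} (hs : ∀ a ∈ s, a ∈ H) (hd : ∀ a ∈ d, a ∈ H)
    {r : R} (hr : r ∈ Lcen (s.length + d.length) H) : llc (s ++ r :: d) = 0 := by
  cases s with
  | nil => exact lprod_eq_zero_of_mem_Lcen (by simpa using hr) hd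
  | cons b t =>
    have hb : b ∈ H := hs b List.mem_cons_self
    have ht : ∀ a ∈ t, a ∈ H := fun a ha => hs a (List.mem_cons_of_mem b ha)
    have hbr : ⁅lprod b t, r⁆ = -⁅r, lprod b t⁆ := (lie_skew _ _).symm
    show lprod b (t ++ r :: d) = 0
    rw [lprod_append, lprod_cons, hbr, lprod_neg, neg_eq_zero]
    exact lprod_eq_zero_of_mem_Lcen (lie_lprod_mem_Lcen hb ht (by simpa using hr)) hd

end

theorem mem_Lcen_insert_general {R : Type*} [Ring R]
    {H : Set R} {k : ℕ} {r : R} (hr : r ∈ Lcen k H)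
    {j : ℕ} (x : Fin k → R) (hx : ∀ i, x i ∈ H) :
    llc ((List.ofFn x).take j ++ r :: (List.ofFn x).drop j) = 0 := by
  have hL : ∀ a ∈ List.ofFn x, a ∈ H := by
    simpa only [List.forall_mem_ofFn_iff] using hx
  refine llc_append_cons_eq_zero (fun a ha => hL a (List.mem_of_mem_take ha))
    (fun a ha => hL a (List.mem_of_mem_drop ha)) ?_
  rwa [← List.length_append, List.take_append_drop, List.length_ofFn]

/-- If `r ∈ L_k(H)`, then inserting `r` into any position of a length-`k+1` left-normed
commutator with the other entries from `H` gives zero. -/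
theorem mem_Lcen_insert {K : Type*} [Field K] {R : Type*} [Ring R] [Algebra K R]
    {H : Set R} {k : ℕ} {r : R} (hr : r ∈ Lcen k H)
    {j : ℕ} (hj1 : 1 ≤ j) (hjk : j ≤ k) (x : Fin k → R) (hx : ∀ i, x i ∈ H) :
    llc ((List.ofFn x).take j ++ r :: (List.ofFn x).drop j) = 0 :=
  mem_Lcen_insert_general hr x hx
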